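/- Let A be an n-by-n reciprocal matrix with n ≥ 4. Then E(A) = ⋃_{i=1}^{n} E(A;i), and moreover for every p ∈ {1,…,n}, E(A) = ⋃_{i=1, i≠p}^{n} E(A;i). -/

import Mathlib

/-!
By the theorem of Blanquero, Carrizosa and Conde, a positive `w` is efficient for `A` iff the
digraph on the indices with an arc `i → j` whenever `A i j ≤ w i / w j` is strongly connected.
For reciprocal `A` this digraph is semicomplete, and deleting a vertex `i` from it gives the
digraph of `(A(i), w(i))`. So it suffices that a strongly connected semicomplete digraph on
`n ≥ 4` vertices has, for every vertex `p`, a vertex `i ≠ p` whose deletion leaves it strongly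
connected. Grow a strongly connected vertex set containing `p` one vertex at a time: an outside
vertex with arcs both to and from the set can be added; if there is none, strong connectivity
provides outside vertices `o → i` with every vertex `c` of the set on the cycle
`c → o → i → c`, and then `o, i` can replace any vertex other than `p`. Stopping at `n - 1`
vertices leaves out the desired `i`.
-/

def PosVec {ι : Type*} (w : ι → ℝ) : Prop := ∀ i, 0 < w i

def IsReciprocal {ι : Type*} (A : Matrix ι ι ℝ) : Prop :=
  (∀ i j, 0 < A i j) ∧ ∀ i j, A j i = 1 / A i j

def IsEfficient {ι : Type*} (A : Matrix ι ι ℝ) (w : ι → ℝ) : Prop :=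
  PosVec w ∧ ∀ v : ι → ℝ, PosVec v →
    (∀ i j, |A i j - v i / v j| ≤ |A i j - w i / w j|) →
    ∃ c : ℝ, 0 < c ∧ v = c • w

/-- The principal submatrix `A(k)` of `A` obtained by deleting row and column `k`. -/
def delMat {n : ℕ} (A : Matrix (Fin n) (Fin n) ℝ) (k : Fin n) :
    Matrix {i : Fin n // i ≠ k} {i : Fin n // i ≠ k} ℝ :=
  Matrix.of fun a b => A a.1 b.1

/-- The vector `w(k)` obtained from `w` by deleting the `k`-th entry. -/
def delVec {n : ℕ} (w : Fin n → ℝ) (k : Fin n) : {i : Fin n // i ≠ k} → ℝ :=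
  fun a => w a.1

/-- `E(A)`, the set of efficient vectors for `A`. -/
def Eset {ι : Type*} (A : Matrix ι ι ℝ) : Set (ι → ℝ) := {w | IsEfficient A w}

/-- `E(A; i)`, the set of efficient vectors `w` for `A` such that `w(i)` is efficient
for `A(i)`. -/
def EsetSub {n : ℕ} (A : Matrix (Fin n) (Fin n) ℝ) (i : Fin n) : Set (Fin n → ℝ) :=
  {w | IsEfficient A w ∧ IsEfficient (delMat A i) (delVec w i)}

open Relation Finset

section Digraph

variable {V : Type*} {R : V → V → Prop}

def StronglyConnected (R : V → V → Prop) : Prop :=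
  ∀ x y, ReflTransGen R x y

/-- Strong connectivity of the subdigraph induced on `s`. -/
def StronglyConnectedOn (R : V → V → Prop) (s : Finset V) : Prop :=
  ∀ x ∈ s, ∀ y ∈ s, ReflTransGen (fun a b => R a b ∧ b ∈ s) x y

theorem Relation.ReflTransGen.exists_exit {P : V → Prop} {a b : V} (h : ReflTransGen R a b)
    (ha : P a) (hb : ¬P b) : ∃ x y, P x ∧ ¬P y ∧ R x y := by
  induction h with
  | refl => exact absurd ha hb
  | @tail c d _ hcd ih =>
    by_cases hc : P c
    · exact ⟨c, d, hc, hb, hcd⟩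
    · exact ih hc

theorem StronglyConnectedOn.stronglyConnected_subtype {s : Finset V} {P : V → Prop}
    (hs : StronglyConnectedOn R s) (hP : ∀ x, x ∈ s ↔ P x) :
    StronglyConnected fun a b : {x // P x} => R a b := by
  have lift : ∀ x y, ReflTransGen (fun a b => R a b ∧ b ∈ s) x y →
      ∀ (hx : P x) (hy : P y),
        ReflTransGen (fun a b : {x // P x} => R a b) ⟨x, hx⟩ ⟨y, hy⟩ := by
    intro x y h
    induction h using ReflTransGen.head_induction_on with
    | refl => exact fun _ _ => .refl
    | head hxz _ ih => exact fun _ hy => .head hxz.1 (ih ((hP _).1 hxz.2) hy)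
  exact fun a b => lift a b (hs a ((hP a).2 a.2) b ((hP b).2 b.2)) a.2 b.2

theorem stronglyConnectedOn_singleton (p : V) : StronglyConnectedOn R {p} := by
  intro x hx y hy
  rw [mem_singleton.1 hx, mem_singleton.1 hy]

theorem exists_insertable_or_bypass (hR : ∀ x y, R x y ∨ R y x) (hc : StronglyConnected R)
    {s : Finset V} {p u : V} (hp : p ∈ s) (hu : u ∉ s) :
    (∃ u ∉ s, (∃ a ∈ s, R a u) ∧ ∃ b ∈ s, R u b) ∨
      ∃ o ∉ s, ∃ i ∉ s, o ≠ i ∧ R o i ∧ (∀ a ∈ s, R a o) ∧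
        ∀ b ∈ s, R i b := by
  refine or_iff_not_imp_left.2 fun hins => ?_
  push Not at hins
  let Out : V → Prop := fun u => u ∉ s ∧ ∀ b ∈ s, ¬R u b
  obtain ⟨x, y, hx, hy, hxy⟩ := (hc p u).exists_exit (P := (· ∈ s)) hp hu
  have hyOut : Out y := ⟨hy, hins y hy ⟨x, hx, hxy⟩⟩
  obtain ⟨o, i, ho, hi, hoi⟩ := (hc y p).exists_exit (P := Out) hyOut fun h => h.1 hp
  have his : i ∉ s := fun h => ho.2 i h hoi
  have hsi : ∀ a ∈ s, ¬R a i := fun a ha hai => hi ⟨his, hins i his ⟨a, ha, hai⟩⟩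
  refine ⟨o, ho.1, i, his, ?_, hoi, fun a ha => (hR a o).resolve_right (ho.2 a ha),
    fun b hb => (hR i b).resolve_right (hsi b hb)⟩
  rintro rfl
  exact hi ho

variable [DecidableEq V]

theorem stronglyConnectedOn_insert {s : Finset V} {a b u : V} (hs : StronglyConnectedOn R s)
    (ha : a ∈ s) (hau : R a u) (hb : b ∈ s) (hub : R u b) :
    StronglyConnectedOn R (insert u s) := by
  have lift : ∀ x ∈ s, ∀ y ∈ s, ReflTransGen (fun c d => R c d ∧ d ∈ insert u s) x y :=
    fun x hx y hy =>
      ReflTransGen.mono (fun _ _ h => ⟨h.1, mem_insert_of_mem h.2⟩) _ _ (hs x hx y hy)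
  have to_a : ∀ x ∈ insert u s, ReflTransGen (fun c d => R c d ∧ d ∈ insert u s) x a := by
    intro x hx
    rcases mem_insert.1 hx with rfl | hx
    · exact .head ⟨hub, mem_insert_of_mem hb⟩ (lift b hb a ha)
    · exact lift x hx a ha
  have from_a : ∀ y ∈ insert u s, ReflTransGen (fun c d => R c d ∧ d ∈ insert u s) a y := by
    intro y hy
    rcases mem_insert.1 hy with rfl | hy
    · exact .single ⟨hau, mem_insert_self _ _⟩
    · exact lift a ha y hy
  exact fun x hx y hy => (to_a x hx).trans (from_a y hy)

/-- Every vertex of `t` lies on the cycle `c → o → i → c`. -/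
theorem stronglyConnectedOn_insert_insert {t : Finset V} {o i : V} (ht : t.Nonempty)
    (hto : ∀ a ∈ t, R a o) (hoi : R o i) (hfrom : ∀ b ∈ t, R i b) :
    StronglyConnectedOn R (insert o (insert i t)) := by
  set s := insert o (insert i t)
  have hos : o ∈ s := mem_insert_self _ _
  have his : i ∈ s := mem_insert_of_mem (mem_insert_self _ _)
  have hts : ∀ {c}, c ∈ t → c ∈ s := fun hc => mem_insert_of_mem (mem_insert_of_mem hc)
  have to_o : ∀ x ∈ s, ReflTransGen (fun c d => R c d ∧ d ∈ s) x o := by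
    intro x hx
    rcases mem_insert.1 hx with rfl | hx
    · exact .refl
    rcases mem_insert.1 hx with rfl | hx
    · obtain ⟨c, hc⟩ := ht
      exact .head ⟨hfrom c hc, hts hc⟩ (.single ⟨hto c hc, hos⟩)
    · exact .single ⟨hto x hx, hos⟩
  have from_o : ∀ y ∈ s, ReflTransGen (fun c d => R c d ∧ d ∈ s) o y := by
    intro y hy
    rcases mem_insert.1 hy with rfl | hy
    · exact .refl
    rcases mem_insert.1 hy with rfl | hy
    · exact .single ⟨hoi, his⟩
    · exact .head ⟨hoi, his⟩ (.single ⟨hfrom y hy, hts hy⟩)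
  exact fun x hx y hy => (to_o x hx).trans (from_o y hy)

variable [Fintype V]

theorem StronglyConnectedOn.exists_card_succ (hR : ∀ x y, R x y ∨ R y x)
    (hc : StronglyConnected R) {s : Finset V} {p : V} (hs : StronglyConnectedOn R s)
    (hp : p ∈ s) (h2 : 2 ≤ #s) (hlt : #s < Fintype.card V) :
    ∃ t, StronglyConnectedOn R t ∧ p ∈ t ∧ #t = #s + 1 := by
  obtain ⟨u, -, hu⟩ :=
    exists_mem_notMem_of_card_lt_card (s := s) (t := univ) (by rwa [card_univ])
  rcases exists_insertable_or_bypass hR hc hp hu with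
    ⟨u, hu, ⟨a, ha, hau⟩, b, hb, hub⟩ | ⟨o, ho, i, hi, hoi, hRoi, hto, hfrom⟩
  · exact ⟨insert u s, stronglyConnectedOn_insert hs ha hau hb hub, mem_insert_of_mem hp,
      card_insert_of_notMem hu⟩
  obtain ⟨x, hx, hxp⟩ := s.exists_mem_ne (by omega) p
  have hpx : p ∈ s.erase x := mem_erase.2 ⟨hxp.symm, hp⟩
  refine ⟨insert o (insert i (s.erase x)),
    stronglyConnectedOn_insert_insert ⟨p, hpx⟩ (fun a ha => hto a (mem_of_mem_erase ha)) hRoi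
      (fun b hb => hfrom b (mem_of_mem_erase hb)),
    mem_insert_of_mem (mem_insert_of_mem hpx), ?_⟩
  rw [card_insert_of_notMem (by simp [hoi, ho]), card_insert_of_notMem (by simp [hi]),
    card_erase_of_mem hx]
  omega

theorem exists_stronglyConnectedOn_two_le_card_le_three (hR : ∀ x y, R x y ∨ R y x)
    (hc : StronglyConnected R) (hV : 2 ≤ Fintype.card V) (p : V) :
    ∃ s, StronglyConnectedOn R s ∧ p ∈ s ∧ 2 ≤ #s ∧ #s ≤ 3 := by
  obtain ⟨u, hu⟩ := Fintype.exists_ne_of_one_lt_card hV p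
  rcases exists_insertable_or_bypass hR hc (mem_singleton_self p) (by simpa using hu) with
    ⟨u, hu, ⟨a, ha, hau⟩, b, hb, hub⟩ | ⟨o, ho, i, hi, hoi, hRoi, hto, hfrom⟩
  · refine ⟨insert u {p},
      stronglyConnectedOn_insert (stronglyConnectedOn_singleton p) ha hau hb hub, by simp, ?_⟩
    rw [card_insert_of_notMem hu, card_singleton]
    omega
  · refine ⟨insert o (insert i {p}),
      stronglyConnectedOn_insert_insert (singleton_nonempty p) hto hRoi hfrom, by simp, ?_⟩
    rw [card_insert_of_notMem (by simp_all), card_insert_of_notMem hi, card_singleton]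
    omega

theorem exists_stronglyConnectedOn_card_eq (hR : ∀ x y, R x y ∨ R y x)
    (hc : StronglyConnected R) (p : V) {k : ℕ} (hk : 3 ≤ k) (hkV : k < Fintype.card V) :
    ∃ s, StronglyConnectedOn R s ∧ p ∈ s ∧ #s = k := by
  obtain ⟨s, hs, hps, h2, h3⟩ :=
    exists_stronglyConnectedOn_two_le_card_le_three hR hc (by omega) p
  have hsk : #s ≤ k := h3.trans hk
  clear hk
  induction k, hsk using Nat.le_induction with
  | base => exact ⟨s, hs, hps, rfl⟩
  | succ k hsk ih =>
    obtain ⟨t, ht, hpt, rfl⟩ := ih (by omega)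
    exact ht.exists_card_succ hR hc hpt (by omega) (by omega)

theorem exists_ne_stronglyConnected_subtype_ne (hR : ∀ x y, R x y ∨ R y x)
    (hc : StronglyConnected R) (hV : 4 ≤ Fintype.card V) (p : V) :
    ∃ i ≠ p, StronglyConnected fun a b : {x // x ≠ i} => R a b := by
  obtain ⟨s, hs, hps, hcard⟩ :=
    exists_stronglyConnectedOn_card_eq hR hc p (k := Fintype.card V - 1) (by omega) (by omega)
  obtain ⟨i, -, hi⟩ :=
    exists_mem_notMem_of_card_lt_card (s := s) (t := univ) (by rw [card_univ]; omega)
  have hs_eq : s = univ.erase i :=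
    eq_of_subset_of_card_le (fun x hx => mem_erase.2 ⟨ne_of_mem_of_not_mem hx hi, mem_univ x⟩)
      (by rw [card_erase_of_mem (mem_univ i), card_univ, hcard])
  exact ⟨i, (ne_of_mem_of_not_mem hps hi).symm,
    hs.stronglyConnected_subtype fun x => by simp [hs_eq]⟩

end Digraph

theorem exists_one_lt_forall_mul_lt {κ : Type*} [Finite κ] (a b : κ → ℝ) :
    ∃ c > 1, ∀ k, a k < b k → c * a k < b k := by
  have near_one : ∀ᶠ c in nhds (1 : ℝ), ∀ k, a k < b k → c * a k < b k := by
    refine Filter.eventually_all.2 fun k => ?_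
    by_cases h : a k < b k
    · have hlim : Filter.Tendsto (fun c : ℝ => c * a k) (nhds 1) (nhds (a k)) := by
        simpa using (continuous_mul_const (a k)).tendsto 1
      exact (hlim.eventually (gt_mem_nhds h)).mono fun _ hc _ => hc
    · exact .of_forall fun _ h' => absurd h' h
  exact ((near_one.filter_mono nhdsWithin_le_nhds).and self_mem_nhdsWithin).exists
    (f := nhdsWithin 1 (Set.Ioi 1)) |>.imp fun c hc => ⟨hc.2, hc.1⟩

def effGraph {ι : Type*} (A : Matrix ι ι ℝ) (w : ι → ℝ) (i j : ι) : Prop :=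
  A i j ≤ w i / w j

section Efficiency

variable {ι : Type*} {A : Matrix ι ι ℝ} {w : ι → ℝ}

theorem effGraph_total (hA : IsReciprocal A) (hw : PosVec w) (i j : ι) :
    effGraph A w i j ∨ effGraph A w j i := by
  refine or_iff_not_imp_left.2 fun h => ?_
  have hlt : w i / w j < A i j := lt_of_not_ge h
  calc A j i = 1 / A i j := hA.2 i j
    _ ≤ 1 / (w i / w j) := one_div_le_one_div_of_le (div_pos (hw i) (hw j)) hlt.le
    _ = w j / w i := one_div_div _ _

/-- Rescaling `w` by `c > 1` on a set `S` that no arc leaves moves every ratio `w x / w y`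
towards `A x y`. -/
theorem not_isEfficient_of_closed [Finite ι] (hA : IsReciprocal A) (hw : PosVec w)
    {S : ι → Prop} (hS : ∀ x y, S x → effGraph A w x y → S y) {i j : ι} (hi : S i)
    (hj : ¬S j) : ¬IsEfficient A w := by
  classical
  obtain ⟨c, hc1, hc⟩ :=
    exists_one_lt_forall_mul_lt (fun k : ι × ι => w k.1 / w k.2) (fun k => A k.1 k.2)
  have hc0 : 0 < c := by linarith
  have cross : ∀ x y, S x → ¬S y → c * (w x / w y) < A x y := fun x y hx hy =>
    hc (x, y) (lt_of_not_ge fun h => hy (hS x y hx h))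
  set v : ι → ℝ := fun k => if S k then c * w k else w k
  have hv : PosVec v := fun k => by
    by_cases hk : S k <;> simp [v, hk, hw k, hc0]
  have closer : ∀ x y, v x / v y ∈ Set.uIcc (w x / w y) (A x y) := by
    intro x y
    have hwx := hw x
    have hwy := hw y
    by_cases hx : S x <;> by_cases hy : S y <;> simp only [v, hx, hy, if_true, if_false]
    · rw [mul_div_mul_left _ _ hc0.ne']; exact Set.left_mem_uIcc
    · rw [mul_div_assoc]
      exact Set.mem_uIcc_of_le (le_mul_of_one_le_left (div_pos hwx hwy).le hc1.le)
        (cross x y hx hy).le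
    · refine Set.mem_uIcc_of_ge ?_ ?_
      · calc A x y = 1 / A y x := hA.2 y x
          _ ≤ 1 / (c * (w y / w x)) :=
            one_div_le_one_div_of_le (by positivity) (cross y x hy hx).le
          _ = w x / (c * w y) := by field_simp
      · exact div_le_div_of_nonneg_left hwx.le hwy (le_mul_of_one_le_left hwy.le hc1.le)
    · exact Set.left_mem_uIcc
  rintro ⟨-, heff⟩
  obtain ⟨c', -, hvw⟩ := heff v hv fun x y => Set.abs_sub_right_of_mem_uIcc (closer x y)
  have hi' : c * w i = c' * w i := by simpa [v, hi] using congrFun hvw i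
  have hj' : w j = c' * w j := by simpa [v, hj] using congrFun hvw j
  have : c = c' := mul_right_cancel₀ (hw i).ne' hi'
  have : c' = 1 := by nlinarith [hw j]
  linarith

theorem stronglyConnected_of_isEfficient [Finite ι] (hA : IsReciprocal A)
    (h : IsEfficient A w) : StronglyConnected (effGraph A w) := fun i j => by
  by_contra hij
  exact not_isEfficient_of_closed hA h.1 (fun _ _ hx hxy => hx.tail hxy) .refl hij h

/-- Along an arc `x → y` leaving the set where `v / w` is maximal, `v x / v y` overshoots
`w x / w y ≥ A x y`. -/
theorem isEfficient_of_stronglyConnected [Finite ι] (hw : PosVec w)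
    (hc : StronglyConnected (effGraph A w)) : IsEfficient A w := by
  refine ⟨hw, fun v hv hle => ?_⟩
  rcases isEmpty_or_nonempty ι with hι | hι
  · exact ⟨1, one_pos, funext fun k => isEmptyElim k⟩
  set t : ι → ℝ := fun k => v k / w k
  obtain ⟨i, hi⟩ := Finite.exists_max t
  suffices ht : ∀ k, t k = t i by
    refine ⟨t i, div_pos (hv i) (hw i), funext fun k => ?_⟩
    rw [Pi.smul_apply, smul_eq_mul, ← ht k, div_mul_cancel₀ _ (hw k).ne']
  by_contra! hne
  obtain ⟨k, hk⟩ := hne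
  obtain ⟨x, y, hx, hy, hxy⟩ := (hc i k).exists_exit (P := fun k => t k = t i) rfl hk
  have hty : t y < t x := hx ▸ lt_of_le_of_ne (hi y) hy
  have hratio : w x / w y < v x / v y := by
    rw [div_lt_div_iff₀ (hw y) (hw x)] at hty
    rw [div_lt_div_iff₀ (hw y) (hv y)]
    linarith
  have := hle x y
  rw [abs_of_nonpos (sub_nonpos.2 hxy), abs_of_nonpos (by linarith [show A x y ≤ _ from hxy])]
    at this
  linarith

end Efficiency

/-- for `n ≥ 4`, `E(A)` is the union of the sets `E(A; i)`, and even the union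
over all `i ≠ p`, for any fixed `p`. -/
theorem Eset_eq_iUnion_EsetSub {n : ℕ} (hn : 4 ≤ n) (A : Matrix (Fin n) (Fin n) ℝ)
    (hA : IsReciprocal A) :
    (Eset A = ⋃ i : Fin n, EsetSub A i) ∧
      (∀ p : Fin n, Eset A = ⋃ i : Fin n, ⋃ _ : i ≠ p, EsetSub A i) := by
  have avoiding : ∀ p : Fin n, Eset A = ⋃ i : Fin n, ⋃ _ : i ≠ p, EsetSub A i := by
    intro p
    refine Set.Subset.antisymm (fun w hw => ?_) (Set.iUnion₂_subset fun i _ w hw => hw.1)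
    obtain ⟨i, hip, hi⟩ := exists_ne_stronglyConnected_subtype_ne (effGraph_total hA hw.1)
      (stronglyConnected_of_isEfficient hA hw) (by simpa using hn) p
    exact Set.mem_iUnion₂.2
      ⟨i, hip, hw, isEfficient_of_stronglyConnected (fun a => hw.1 a) hi⟩
  refine ⟨Set.Subset.antisymm ?_ (Set.iUnion_subset fun i w hw => hw.1), avoiding⟩
  rw [avoiding ⟨0, by omega⟩]
  exact Set.iUnion_mono fun i => Set.iUnion_subset fun _ => subset_rfl
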